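/- Let Φ be an n-tuple of polynomials with integer coefficients, p a sufficiently large prime (so that I(V(𝔽_q)) = π_p(I(V(ℤ_q))) holds), q = p^k, and ℤ_q the ring of integers of the unramified extension of ℚ_p with residue field 𝔽_q. Let X ∈ V(ℤ_q) (i.e. every G ∈ I(V(ℤ_q)) vanishes at X), let x = X mod p, and suppose M is a positive integer such that Φ^M(X) ≡ X (mod p) and such that the tangent map of the reduction φ^M of Φ^M mod p, restricted to the Zariski tangent space of V(𝔽_q) at x, is the identity. Let α⁽¹⁾ ∈ 𝔽_qⁿ be the reduction mod p of (Φ^M(X) − X)/p. Then for every X' ∈ V(ℤ_q) with X' ≡ X (mod p), one has Φ^M(X') ≡ X' + α⁽¹⁾·p (mod p²). -/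
import Mathlib


open MvPolynomial

noncomputable section

/-- The substitution endomorphism `Φ* : f ↦ f ∘ Φ` of the polynomial ring `R[x₁,…,xₙ]`
induced by an `n`-tuple `Φ` of polynomials. -/
def substEnd (R : Type*) [CommRing R] {n : ℕ} (Φ : Fin n → MvPolynomial (Fin n) R) :
    MvPolynomial (Fin n) R →ₐ[R] MvPolynomial (Fin n) R :=
  MvPolynomial.aeval Φ

/-- The ideal `I(V(R))`: the kernel of the `n`-th power `(Φ*)ⁿ` of the substitution
endomorphism. -/
def iterKer (R : Type*) [CommRing R] {n : ℕ} (Φ : Fin n → MvPolynomial (Fin n) R) :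
    Ideal (MvPolynomial (Fin n) R) :=
  RingHom.ker (substEnd R Φ ^ n)

/-- The polynomial self-map of `Rⁿ` defined by an `n`-tuple of polynomials. -/
def polySelfMap {R : Type*} [CommRing R] {n : ℕ} (Φ : Fin n → MvPolynomial (Fin n) R) :
    (Fin n → R) → (Fin n → R) :=
  fun v i => eval v (Φ i)

/-- `ℤ_q`: the ring of integers of the unramified extension of `ℚ_p` with residue field
`𝔽_q`, `q = p^k`, realized as the ring of Witt vectors of `𝔽_q`. -/
abbrev Zq (p k : ℕ) [Fact p.Prime] : Type _ := WittVector p (GaloisField p k)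


section AuxLemmas

variable {R : Type*} [CommRing R] {n : ℕ}

lemma eval_ringhom_comm {S : Type*} [CommRing S] (f : R →+* S)
    (v : Fin n → R) (G : MvPolynomial (Fin n) R) :
    eval (fun i => f (v i)) (MvPolynomial.map f G) = f (eval v G) := by
  rw [eval_map, ← eval₂_id (g := v) G, eval₂_comp_left f (RingHom.id R) v G]
  rfl

lemma sum_e_pderiv_mul_X (v e : Fin n → R)
    (f : MvPolynomial (Fin n) R) (i : Fin n) :
    ∑ j : Fin n, e j * eval v (pderiv j (f * X i)) =
      v i * (∑ j : Fin n, e j * eval v (pderiv j f)) + e i * eval v f := by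
  simp only [pderiv_mul, pderiv_X, map_add, map_mul, eval_X, Pi.single_apply,
    apply_ite (eval v), map_one, map_zero, mul_ite, mul_one, mul_zero, mul_add,
    Finset.sum_add_distrib, Finset.sum_ite_eq, Finset.mem_univ, if_true]
  rw [Finset.mul_sum]
  congr 1
  exact Finset.sum_congr rfl fun j _ => by ring

lemma taylor_dvd (c : R) (v e : Fin n → R)
    (F : MvPolynomial (Fin n) R) :
    c ^ 2 ∣ eval (fun j => v j + c * e j) F -
      (eval v F + c * ∑ j : Fin n, e j * eval v (pderiv j F)) := by
  induction F using MvPolynomial.induction_on with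
  | C a => simp
  | add f g hf hg =>
      have h := dvd_add hf hg
      convert h using 1
      simp only [map_add, mul_add, Finset.mul_sum, Finset.sum_add_distrib]
      ring
  | mul_X f i hf =>
      obtain ⟨r, hr⟩ := hf
      set A := eval (fun j => v j + c * e j) f with hA
      set a := eval v f with ha
      set s := ∑ j : Fin n, e j * eval v (pderiv j f) with hs
      refine ⟨s * e i + r * v i + c * (r * e i), ?_⟩
      rw [sum_e_pderiv_mul_X v e f i, map_mul, map_mul, eval_X, eval_X, ← hA, ← ha, ← hs]
      linear_combination (v i + c * e i) * hr

lemma eval_substEnd (Φ : Fin n → MvPolynomial (Fin n) R)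
    (v : Fin n → R) (f : MvPolynomial (Fin n) R) :
    eval v (substEnd R Φ f) = eval (polySelfMap Φ v) f := by
  show eval v (aeval Φ f) = _
  rw [aeval_def, eval₂_comp_left (eval v) (algebraMap R _) Φ f]
  have h : (eval v).comp (algebraMap R (MvPolynomial (Fin n) R)) = RingHom.id R := by
    ext a
    simp
  rw [h, eval₂_id]
  rfl

lemma eval_substEnd_pow (Φ : Fin n → MvPolynomial (Fin n) R)
    (M : ℕ) (v : Fin n → R) (f : MvPolynomial (Fin n) R) :
    eval v ((substEnd R Φ ^ M) f) = eval ((polySelfMap Φ)^[M] v) f := by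
  induction M generalizing f with
  | zero => simp
  | succ M ih =>
      rw [pow_succ, AlgHom.mul_apply, ih, Function.iterate_succ_apply', eval_substEnd]

lemma map_substEnd_pow {S : Type*} [CommRing S] (f : R →+* S)
    (Φ : Fin n → MvPolynomial (Fin n) R) (M : ℕ) (g : MvPolynomial (Fin n) R) :
    MvPolynomial.map f ((substEnd R Φ ^ M) g) =
      (substEnd S (fun i => MvPolynomial.map f (Φ i)) ^ M) (MvPolynomial.map f g) := by
  induction M generalizing g with
  | zero => simp
  | succ M ih =>
      simp only [pow_succ, AlgHom.mul_apply]
      rw [ih]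
      congr 1
      show MvPolynomial.map f (aeval Φ g) = aeval _ (MvPolynomial.map f g)
      induction g using MvPolynomial.induction_on with
      | C a => simp only [aeval_C, MvPolynomial.algebraMap_eq, MvPolynomial.map_C]
      | add u w hu hw => simp only [map_add, hu, hw]
      | mul_X u i hu => simp only [map_mul, MvPolynomial.map_X, aeval_X, hu]

end AuxLemmas

/-- Let `Φ` be an integer polynomial self-map of affine `n`-space, `p` a sufficiently large
prime (so that `I(V(𝔽_q)) = π_p(I(V(ℤ_q)))`), `X ∈ V(ℤ_q)` with reduction `x = π∘X`, and `M`
a positive integer such that `Φ^M(X) ≡ X (mod p)` and the tangent map of the reduction of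
`Φ^M` mod `p` restricted to the Zariski tangent space of `V(𝔽_q)` at `x` is the identity.
If `α⁽¹⁾` is the reduction mod `p` of `(Φ^M(X) − X)/p` (with lift `D`), then for every
`X' ∈ V(ℤ_q)` with `X' ≡ X (mod p)` one has `Φ^M(X') ≡ X' + α⁽¹⁾·p (mod p²)`. -/
theorem iterate_fixed_mod_p_sq (n : ℕ) (Φ : Fin n → MvPolynomial (Fin n) ℤ)
    (p : ℕ) [Fact p.Prime] (k : ℕ) (hk : 1 ≤ k)
    (π : Zq p k →+* GaloisField p k) (hπ : Function.Surjective π)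
    (hker : RingHom.ker π = Ideal.span {(p : Zq p k)})
    -- `p` is sufficiently large: `I(V(𝔽_q)) = π_p (I(V(ℤ_q)))`
    (hp : iterKer (GaloisField p k)
        (fun i => MvPolynomial.map (Int.castRingHom (GaloisField p k)) (Φ i)) =
      Ideal.map (MvPolynomial.map π)
        (iterKer (Zq p k) (fun i => MvPolynomial.map (Int.castRingHom (Zq p k)) (Φ i))))
    -- the point `X ∈ V(ℤ_q)` and its reduction `x`
    (X : Fin n → Zq p k)
    (hX : ∀ G ∈ iterKer (Zq p k)
      (fun i => MvPolynomial.map (Int.castRingHom (Zq p k)) (Φ i)), eval X G = 0)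
    (M : ℕ) (hM : 0 < M)
    -- `Φ^M(X) ≡ X (mod p)`
    (hfix : ∀ i, π ((polySelfMap
      (fun i => MvPolynomial.map (Int.castRingHom (Zq p k)) (Φ i)))^[M] X i) = π (X i))
    -- the tangent map of the reduction of `Φ^M`, restricted to the Zariski tangent space of
    -- `V(𝔽_q)` at `x = π ∘ X`, is the identity
    (htan : ∀ y : Fin n → GaloisField p k,
      (∀ g ∈ iterKer (GaloisField p k)
          (fun i => MvPolynomial.map (Int.castRingHom (GaloisField p k)) (Φ i)),
        ∑ j : Fin n, eval (fun i => π (X i)) (pderiv j g) * y j = 0) →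
      ∀ i : Fin n,
        ∑ j : Fin n, eval (fun i => π (X i))
          (pderiv j ((substEnd (GaloisField p k)
            (fun i => MvPolynomial.map (Int.castRingHom (GaloisField p k)) (Φ i)) ^ M)
              (MvPolynomial.X i))) * y j = y i)
    -- `D` is the divided difference `(Φ^M(X) − X)/p`, whose reduction is `α⁽¹⁾`
    (D : Fin n → Zq p k)
    (hD : ∀ i, (polySelfMap
        (fun i => MvPolynomial.map (Int.castRingHom (Zq p k)) (Φ i)))^[M] X i - X i =
      (p : Zq p k) * D i) :
    ∀ X' : Fin n → Zq p k,
      (∀ G ∈ iterKer (Zq p k)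
        (fun i => MvPolynomial.map (Int.castRingHom (Zq p k)) (Φ i)), eval X' G = 0) →
      (∀ i, π (X' i) = π (X i)) →
      ∀ i, ((p : Zq p k) ^ 2) ∣
        ((polySelfMap
          (fun i => MvPolynomial.map (Int.castRingHom (Zq p k)) (Φ i)))^[M] X' i -
          (X' i + (p : Zq p k) * D i)) := by
  classical
  intro X' hX' hX'X i
  -- basic facts about `p` in `Zq`
  have hpdvd : ∀ a : Zq p k, π a = 0 ↔ (p : Zq p k) ∣ a := fun a => by
    rw [← RingHom.mem_ker, hker, Ideal.mem_span_singleton]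
  have hpne : (p : Zq p k) ≠ 0 := WittVector.p_nonzero p (GaloisField p k)
  -- write `X' = X + p • E`
  have hE : ∀ j, ∃ e, X' j = X j + (p : Zq p k) * e := by
    intro j
    have h0 : π (X' j - X j) = 0 := by rw [map_sub, hX'X, sub_self]
    obtain ⟨e, he⟩ := (hpdvd _).mp h0
    exact ⟨e, by rw [← he]; ring⟩
  choose E hEdef using hE
  have hXeq : X' = fun j => X j + (p : Zq p k) * E j := funext hEdef
  -- the reduction of `E` lies in the tangent space
  have hΦmap : (fun i => MvPolynomial.map π
      (MvPolynomial.map (Int.castRingHom (Zq p k)) (Φ i))) =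
      (fun i => MvPolynomial.map (Int.castRingHom (GaloisField p k)) (Φ i)) := by
    funext i
    rw [MvPolynomial.map_map]
    have hc : π.comp (Int.castRingHom (Zq p k)) = Int.castRingHom (GaloisField p k) :=
      Subsingleton.elim _ _
    rw [hc]
  have hy : ∀ g ∈ iterKer (GaloisField p k)
      (fun i => MvPolynomial.map (Int.castRingHom (GaloisField p k)) (Φ i)),
      ∑ j : Fin n, eval (fun i => π (X i)) (pderiv j g) * π (E j) = 0 := by
    intro g hg
    rw [hp] at hg
    obtain ⟨G, hG, rfl⟩ := (Ideal.mem_map_iff_of_surjective _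
      (MvPolynomial.map_surjective π hπ)).mp hg
    have hT := taylor_dvd (p : Zq p k) X E G
    rw [← hXeq, hX' G hG, hX G hG] at hT
    obtain ⟨r, hr⟩ := hT
    have hS : (p : Zq p k) ∣ ∑ j : Fin n, E j * eval X (pderiv j G) := by
      refine ⟨-r, mul_left_cancel₀ hpne ?_⟩
      linear_combination -hr
    have hπS : π (∑ j : Fin n, E j * eval X (pderiv j G)) = 0 := (hpdvd _).mpr hS
    rw [← hπS, map_sum]
    refine Finset.sum_congr rfl fun j _ => ?_
    rw [pderiv_map, eval_ringhom_comm, map_mul, mul_comm]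
  -- the tangent map is the identity on `π ∘ E`
  have hyT := htan (fun j => π (E j)) hy i
  -- reduction of the iterate polynomial
  have hFi : MvPolynomial.map π ((substEnd (Zq p k)
      (fun i => MvPolynomial.map (Int.castRingHom (Zq p k)) (Φ i)) ^ M)
        (MvPolynomial.X i)) =
      (substEnd (GaloisField p k)
        (fun i => MvPolynomial.map (Int.castRingHom (GaloisField p k)) (Φ i)) ^ M)
          (MvPolynomial.X i) := by
    rw [map_substEnd_pow, MvPolynomial.map_X]
    exact congrArg (fun Ψ => (substEnd (GaloisField p k) Ψ ^ M) (MvPolynomial.X i)) hΦmap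
  -- the sum `S_i` reduces to `π (E i)`
  have hS' : π (∑ j : Fin n, E j * eval X (pderiv j ((substEnd (Zq p k)
      (fun i => MvPolynomial.map (Int.castRingHom (Zq p k)) (Φ i)) ^ M)
        (MvPolynomial.X i)))) = π (E i) := by
    rw [← hyT, map_sum]
    refine Finset.sum_congr rfl fun j _ => ?_
    rw [← hFi, pderiv_map, eval_ringhom_comm, map_mul, mul_comm]
  have hdvdSE : (p : Zq p k) ∣ (∑ j : Fin n, E j * eval X (pderiv j ((substEnd (Zq p k)
      (fun i => MvPolynomial.map (Int.castRingHom (Zq p k)) (Φ i)) ^ M)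
        (MvPolynomial.X i)))) - E i := by
    refine (hpdvd _).mp ?_
    rw [map_sub, hS', sub_self]
  -- Taylor expansion of the iterate polynomial at `X`
  have hT2 := taylor_dvd (p : Zq p k) X E ((substEnd (Zq p k)
      (fun i => MvPolynomial.map (Int.castRingHom (Zq p k)) (Φ i)) ^ M)
        (MvPolynomial.X i))
  rw [← hXeq] at hT2
  have hiter' : (polySelfMap
      (fun i => MvPolynomial.map (Int.castRingHom (Zq p k)) (Φ i)))^[M] X' i =
      eval X' ((substEnd (Zq p k)
        (fun i => MvPolynomial.map (Int.castRingHom (Zq p k)) (Φ i)) ^ M)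
          (MvPolynomial.X i)) := by
    rw [eval_substEnd_pow, eval_X]
  have hiterX : eval X ((substEnd (Zq p k)
      (fun i => MvPolynomial.map (Int.castRingHom (Zq p k)) (Φ i)) ^ M)
        (MvPolynomial.X i)) = X i + (p : Zq p k) * D i := by
    rw [eval_substEnd_pow, eval_X]
    linear_combination hD i
  rw [hiter', hEdef i]
  obtain ⟨t, ht⟩ := hT2
  obtain ⟨u, hu⟩ := hdvdSE
  refine ⟨t + u, ?_⟩
  linear_combination ht + hiterX + (p : Zq p k) * hu


end
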